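/- arXiv:2207.08643 — 3 statements merged into one kernel-verified Lean document; each statement's English description precedes it below -/
import Mathlib

section
/- Let ε ∈ (0,1], let ℓ ≥ 1 be an integer, and let Y₁, ..., Y_ℓ be independent square-integrable real random variables. Let μ₁, ..., μ_ℓ > 0 be reals such that for every i: E[Yᵢ] > 0, |E[Yᵢ] − μᵢ| ≤ (ε/(6ℓ))·μᵢ, and Var(Yᵢ) ≤ (ε²/(64ℓ))·E[Yᵢ]². Then with probability at least 3/4, the product satisfies |∏_{i=1}^{ℓ} Yᵢ − ∏_{i=1}^{ℓ} μᵢ| ≤ ε·∏_{i=1}^{ℓ} μᵢ. -/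
open MeasureTheory ProbabilityTheory
open scoped ENNReal

lemma aux_pow_le {x : ℝ} {n : ℕ} (hx : 0 ≤ x) (hn1 : 1 ≤ n)
    (hnx : (n : ℝ) * x ≤ 1/2) :
    (1 + x) ^ n ≤ 1 / (1 - (n : ℝ) * x) := by
  have hn : (1:ℝ) ≤ n := Nat.one_le_cast.mpr hn1
  have hx1 : x ≤ 1/2 := by nlinarith
  have h1 : (1:ℝ) - (n:ℝ) * x ≤ (1 - x) ^ n := by
    have h := one_add_mul_le_pow (a := -x) (by linarith) n
    calc (1:ℝ) - n*x = 1 + n * (-x) := by ring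
    _ ≤ (1 + -x)^n := h
    _ = (1 - x)^n := by rw [sub_eq_add_neg]
  have h2 : (1 + x) ^ n * (1 - x) ^ n ≤ 1 := by
    rw [← mul_pow]
    apply pow_le_one₀ <;> nlinarith
  have h3 : (0:ℝ) < 1 - (n:ℝ) * x := by linarith
  rw [le_div_iff₀ h3]
  calc (1 + x)^n * (1 - (n:ℝ)*x) ≤ (1+x)^n * (1-x)^n := by
        apply mul_le_mul_of_nonneg_left h1 (by positivity)
  _ ≤ 1 := h2

lemma aux_prod_integral {Ω : Type*} [MeasureSpace Ω] [IsProbabilityMeasure (ℙ : Measure Ω)]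
    {n : ℕ} (f : Fin n → Ω → ℝ) (hmeas : ∀ i, Measurable (f i))
    (hindep : iIndepFun f ℙ)
    (hint : ∀ i, Integrable (f i) ℙ) (s : Finset (Fin n)) :
    Integrable (fun ω => ∏ i ∈ s, f i ω) ℙ ∧
      (∫ ω, ∏ i ∈ s, f i ω ∂ℙ) = ∏ i ∈ s, ∫ ω, f i ω ∂ℙ := by
  classical
  induction s using Finset.cons_induction with
  | empty => simp
  | cons i s hi ih =>
    have hind : IndepFun (fun ω => ∏ j ∈ s, f j ω) (f i) ℙ := by
      have h := hindep.indepFun_finset_prod_of_notMem hmeas hi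
      have he : (∏ j ∈ s, f j) = fun ω => ∏ j ∈ s, f j ω := by
        funext ω; simp [Finset.prod_apply]
      rwa [he] at h
    have hji : Integrable (fun ω => (∏ j ∈ s, f j ω) * f i ω) ℙ := by
      have h := hind.integrable_mul ih.1 (hint i)
      simpa [Pi.mul_def] using h
    constructor
    · have : (fun ω => ∏ j ∈ Finset.cons i s hi, f j ω)
          = fun ω => (∏ j ∈ s, f j ω) * f i ω := by
        funext ω; rw [Finset.prod_cons, mul_comm]
      rw [this]; exact hji
    · have h := hind.integral_mul_eq_mul_integral ih.1.aestronglyMeasurable (hint i).aestronglyMeasurable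
      simp only [Pi.mul_def] at h
      calc (∫ ω, ∏ j ∈ Finset.cons i s hi, f j ω ∂ℙ)
          = ∫ ω, (∏ j ∈ s, f j ω) * f i ω ∂ℙ := by
            congr 1; funext ω; rw [Finset.prod_cons, mul_comm]
      _ = (∫ ω, ∏ j ∈ s, f j ω ∂ℙ) * ∫ ω, f i ω ∂ℙ := h
      _ = ∏ j ∈ Finset.cons i s hi, ∫ ω, f j ω ∂ℙ := by
            rw [ih.2, Finset.prod_cons, mul_comm]

set_option maxHeartbeats 1600000 in
theorem product_estimator_chebyshev
    {Ω : Type*} [MeasureSpace Ω] [IsProbabilityMeasure (ℙ : Measure Ω)]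
    (ε : ℝ) (hε0 : 0 < ε) (hε1 : ε ≤ 1) (ℓ : ℕ) (hℓ : 1 ≤ ℓ)
    (Y : Fin ℓ → Ω → ℝ) (hmeas : ∀ i, Measurable (Y i))
    (hL2 : ∀ i, MemLp (Y i) 2 ℙ)
    (hindep : iIndepFun Y ℙ)
    (μ : Fin ℓ → ℝ) (hμpos : ∀ i, 0 < μ i)
    (hEpos : ∀ i, 0 < ∫ ω, Y i ω ∂ℙ)
    (hbias : ∀ i, |(∫ ω, Y i ω ∂ℙ) - μ i| ≤ ε / (6 * (ℓ : ℝ)) * μ i)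
    (hvar : ∀ i, variance (Y i) ℙ ≤ ε ^ 2 / (64 * (ℓ : ℝ)) * (∫ ω, Y i ω ∂ℙ) ^ 2) :
    3 / 4 ≤ ℙ {ω | |(∏ i, Y i ω) - ∏ i, μ i| ≤ ε * ∏ i, μ i} := by
  classical
  have hℓr : (1:ℝ) ≤ (ℓ:ℝ) := Nat.one_le_cast.mpr hℓ
  have hℓpos : (0:ℝ) < (ℓ:ℝ) := by linarith
  have hε2 : ε ^ 2 ≤ 1 := by nlinarith
  set m : Fin ℓ → ℝ := fun i => ∫ ω, Y i ω ∂ℙ with hm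
  set T : ℝ := ∏ i, μ i with hT
  set M : ℝ := ∏ i, m i with hM
  have hTpos : 0 < T := Finset.prod_pos fun i _ => hμpos i
  have hMpos : 0 < M := Finset.prod_pos fun i _ => hEpos i
  -- integrability facts
  have hint : ∀ i, Integrable (Y i) ℙ := fun i => (hL2 i).integrable one_le_two
  have hsqmeas : ∀ i, Measurable (fun ω => Y i ω ^ 2) := fun i => (hmeas i).pow_const 2
  have hsqint : ∀ i, Integrable (fun ω => Y i ω ^ 2) ℙ := fun i => (hL2 i).integrable_sq
  have hsqindep : iIndepFun (fun i => fun ω => Y i ω ^ 2) ℙ :=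
    hindep.comp (fun _ => fun x : ℝ => x ^ 2) (fun _ => measurable_id.pow_const 2)
  have hP := aux_prod_integral Y hmeas hindep hint Finset.univ
  have hP2 := aux_prod_integral (fun i => fun ω => Y i ω ^ 2) hsqmeas hsqindep hsqint Finset.univ
  have hPmeas : Measurable (fun ω => ∏ i, Y i ω) :=
    Finset.measurable_prod _ fun i _ => hmeas i
  have hP2int : Integrable (fun ω => (∏ i, Y i ω) ^ 2) ℙ := by
    have h := hP2.1
    simpa [Finset.prod_pow] using h
  have hPL2 : MemLp (fun ω => ∏ i, Y i ω) 2 ℙ :=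
    (memLp_two_iff_integrable_sq hPmeas.aestronglyMeasurable).mpr hP2int
  have hPexp : (∫ ω, ∏ i, Y i ω ∂ℙ) = M := hP.2
  -- variance of the product
  have hvarP : variance (fun ω => ∏ i, Y i ω) ℙ = (∏ i, ∫ ω, Y i ω ^ 2 ∂ℙ) - M ^ 2 := by
    rw [variance_eq_sub hPL2]
    congr 1
    · calc (∫ ω, ((fun ω => ∏ i, Y i ω) ^ 2) ω ∂ℙ)
          = ∫ ω, ∏ i, Y i ω ^ 2 ∂ℙ := by
            congr 1; funext ω; simp [Finset.prod_pow]
      _ = ∏ i, ∫ ω, Y i ω ^ 2 ∂ℙ := hP2.2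
    · rw [hPexp]
  -- per-coordinate second moment bound
  set a : ℝ := ε ^ 2 / (64 * (ℓ:ℝ)) with ha
  have ha0 : 0 ≤ a := by positivity
  have hsec : ∀ i, (∫ ω, Y i ω ^ 2 ∂ℙ) = variance (Y i) ℙ + (m i) ^ 2 := by
    intro i
    have h := variance_eq_sub (hL2 i)
    have h2 : (∫ ω, ((Y i) ^ 2) ω ∂ℙ) = ∫ ω, Y i ω ^ 2 ∂ℙ := by congr 1
    rw [h2] at h
    rw [h]; ring
  have hsecle : ∀ i, (∫ ω, Y i ω ^ 2 ∂ℙ) ≤ (1 + a) * (m i) ^ 2 := by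
    intro i
    rw [hsec i]
    have := hvar i
    nlinarith [sq_nonneg (m i)]
  have hprodsec : (∏ i, ∫ ω, Y i ω ^ 2 ∂ℙ) ≤ (1 + a) ^ ℓ * M ^ 2 := by
    calc (∏ i, ∫ ω, Y i ω ^ 2 ∂ℙ) ≤ ∏ i, (1 + a) * (m i) ^ 2 := by
          apply Finset.prod_le_prod
          · intro i _; exact integral_nonneg fun ω => sq_nonneg _
          · intro i _; exact hsecle i
    _ = (1 + a) ^ ℓ * M ^ 2 := by
        rw [Finset.prod_mul_distrib, Finset.prod_const, Finset.card_univ, Fintype.card_fin,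
          Finset.prod_pow]
  have hla : (ℓ:ℝ) * a = ε ^ 2 / 64 := by
    rw [ha]; field_simp
  have hda : (0:ℝ) < 1 - ε ^ 2 / 64 := by nlinarith
  have hpowa : (1 + a) ^ ℓ ≤ 1 + ε ^ 2 / 63 := by
    have h := aux_pow_le ha0 hℓ (by rw [hla]; linarith)
    rw [hla] at h
    refine h.trans ?_
    rw [div_le_iff₀ hda]
    nlinarith [sq_nonneg ε, mul_le_mul_of_nonneg_left hε2 (sq_nonneg ε)]
  have hVarbound : variance (fun ω => ∏ i, Y i ω) ℙ ≤ ε ^ 2 / 63 * M ^ 2 := by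
    rw [hvarP]
    have h := mul_le_mul_of_nonneg_right hpowa (sq_nonneg M)
    linarith [hprodsec]
  -- bias bounds
  set δ : ℝ := ε / (6 * (ℓ:ℝ)) with hδ
  have hδ0 : 0 ≤ δ := by positivity
  have hlδ : (ℓ:ℝ) * δ = ε / 6 := by rw [hδ]; field_simp
  have hd6 : (0:ℝ) < 1 - ε / 6 := by linarith
  have hδ1 : δ ≤ 1 := by
    rw [hδ, div_le_one (by positivity)]; nlinarith
  have hpowδ : (1 + δ) ^ ℓ ≤ 1 + ε / 5 := by
    have h := aux_pow_le hδ0 hℓ (by rw [hlδ]; linarith)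
    rw [hlδ] at h
    refine h.trans ?_
    rw [div_le_iff₀ hd6]
    nlinarith
  have hMub : M ≤ (1 + ε / 5) * T := by
    have h1 : M ≤ ∏ i, (1 + δ) * μ i := by
      apply Finset.prod_le_prod
      · intro i _; exact (hEpos i).le
      · intro i _
        have h := (abs_le.mp (hbias i)).2
        have : m i - μ i ≤ δ * μ i := h
        nlinarith [(hμpos i).le]
    have h2 : (∏ i, (1 + δ) * μ i) = (1 + δ) ^ ℓ * T := by
      rw [Finset.prod_mul_distrib, Finset.prod_const, Finset.card_univ, Fintype.card_fin]
    have h3 := mul_le_mul_of_nonneg_right hpowδ hTpos.le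
    calc M ≤ (1 + δ) ^ ℓ * T := by rw [← h2]; exact h1
    _ ≤ (1 + ε / 5) * T := h3
  have hMlb : (1 - ε / 6) * T ≤ M := by
    have h1 : ∏ i, (1 - δ) * μ i ≤ M := by
      apply Finset.prod_le_prod
      · intro i _; nlinarith [(hμpos i).le]
      · intro i _
        have h := (abs_le.mp (hbias i)).1
        have : -(δ * μ i) ≤ m i - μ i := h
        nlinarith [(hμpos i).le]
    have h2 : (∏ i, (1 - δ) * μ i) = (1 - δ) ^ ℓ * T := by
      rw [Finset.prod_mul_distrib, Finset.prod_const, Finset.card_univ, Fintype.card_fin]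
    have h3 : (1:ℝ) - ε / 6 ≤ (1 - δ) ^ ℓ := by
      have hb := one_add_mul_le_pow (a := -δ) (by linarith) ℓ
      have he : (1:ℝ) + (ℓ:ℝ) * (-δ) = 1 - ε / 6 := by rw [mul_neg, hlδ]; ring
      rw [he] at hb
      calc (1:ℝ) - ε / 6 ≤ (1 + -δ) ^ ℓ := hb
      _ = (1 - δ) ^ ℓ := by rw [sub_eq_add_neg]
    calc (1 - ε / 6) * T ≤ (1 - δ) ^ ℓ * T := by nlinarith
    _ ≤ M := h2 ▸ h1
  have hMub' : M ≤ (6/5) * T := by nlinarith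
  have hMT : |M - T| ≤ ε / 5 * T := by
    rw [abs_le]
    constructor
    · nlinarith
    · nlinarith
  -- Chebyshev
  set c : ℝ := (4/5) * ε * T with hc
  have hcpos : 0 < c := by positivity
  have hcheb := meas_ge_le_variance_div_sq (μ := ℙ) hPL2 hcpos
  have hratio : variance (fun ω => ∏ i, Y i ω) ℙ / c ^ 2 ≤ 1/4 := by
    rw [div_le_iff₀ (by positivity)]
    have hM2 : M ^ 2 ≤ (36/25) * T ^ 2 := by nlinarith
    have hcc : (1/4 : ℝ) * c ^ 2 = (4/25) * ε ^ 2 * T ^ 2 := by rw [hc]; ring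
    rw [hcc]
    nlinarith [hVarbound, sq_nonneg ε, sq_nonneg T, pow_pos hTpos 2, pow_pos hε0 2,
      mul_le_mul_of_nonneg_left hM2 (sq_nonneg ε)]
  have hbadset : ℙ {ω | c ≤ |(∏ i, Y i ω) - M|} ≤ 1/4 := by
    have heq : (∫ ω, (fun ω => ∏ i, Y i ω) ω ∂ℙ) = M := hPexp
    rw [heq] at hcheb
    calc ℙ {ω | c ≤ |(∏ i, Y i ω) - M|}
        ≤ ENNReal.ofReal (variance (fun ω => ∏ i, Y i ω) ℙ / c ^ 2) := hcheb
    _ ≤ ENNReal.ofReal (1/4) := ENNReal.ofReal_le_ofReal hratio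
    _ = 1/4 := by
        rw [ENNReal.ofReal_div_of_pos (by norm_num), ENNReal.ofReal_one,
          ENNReal.ofReal_ofNat]
  have hbadmeas : MeasurableSet {ω | c ≤ |(∏ i, Y i ω) - M|} :=
    measurableSet_le measurable_const ((hPmeas.sub measurable_const).abs)
  have hsub : {ω | c ≤ |(∏ i, Y i ω) - M|}ᶜ ⊆ {ω | |(∏ i, Y i ω) - T| ≤ ε * T} := by
    intro ω hω
    simp only [Set.mem_compl_iff, Set.mem_setOf_eq, not_le] at hω ⊢
    calc |(∏ i, Y i ω) - T| ≤ |(∏ i, Y i ω) - M| + |M - T| := abs_sub_le _ _ _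
    _ ≤ c + ε / 5 * T := add_le_add hω.le hMT
    _ = ε * T := by rw [hc]; ring
  have h34 : (1:ℝ≥0∞) - 1/4 = 3/4 := by
    rw [ENNReal.sub_eq_of_eq_add (by norm_num : (1/4:ℝ≥0∞) ≠ ⊤)]
    rw [ENNReal.div_add_div_same]
    norm_num
    exact (ENNReal.div_self (by norm_num) (by norm_num)).symm
  calc (3/4 : ℝ≥0∞) = 1 - 1/4 := h34.symm
  _ ≤ 1 - ℙ {ω | c ≤ |(∏ i, Y i ω) - M|} := tsub_le_tsub_left hbadset 1
  _ = ℙ {ω | c ≤ |(∏ i, Y i ω) - M|}ᶜ := (prob_compl_eq_one_sub hbadmeas).symm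
  _ ≤ ℙ {ω | |(∏ i, Y i ω) - T| ≤ ε * T} := measure_mono hsub
end

section
/- Let X be a bounded real random variable on a probability space, let θ, M, b, v ≥ 0 be reals with |X − θ| ≤ M almost surely, and let A be an event with P(A) ≥ 1 − η for some η ∈ [0,1). If the conditional moments satisfy Var(X | A) ≤ v and |E[X | A] − θ| ≤ b, then Var(X) ≤ v + b² + η·M². -/
/-!
Since `Var X ≤ 𝔼[(X - θ)²]`, it suffices to split `𝔼[(X - θ)²]` over `A` and `Aᶜ`. On `A` it equals
`ℙ(A) · 𝔼[(X - θ)² | A] = ℙ(A) · (Var(X | A) + (𝔼[X | A] - θ)²) ≤ v + b²`, and on `Aᶜ` the integrand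
is at most `M²` on a set of probability at most `η`.
-/

open MeasureTheory ProbabilityTheory

section

variable {Ω : Type*} {mΩ : MeasurableSpace Ω} {μ : Measure Ω} {X : Ω → ℝ} {s : Set Ω}

lemma memLp_of_ae_abs_sub_le [IsFiniteMeasure μ] {p : ENNReal} {c M : ℝ}
    (hX : AEStronglyMeasurable X μ) (hbound : ∀ᵐ ω ∂μ, |X ω - c| ≤ M) : MemLp X p μ := by
  have hsub : MemLp (fun ω ↦ X ω - c) p μ :=
    .of_bound (hX.sub aestronglyMeasurable_const) M (by simpa only [Real.norm_eq_abs] using hbound)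
  convert hsub.add (memLp_const c) using 1
  ext ω
  simp

lemma integral_sub_const_sq_eq_variance_add [IsProbabilityMeasure μ] (hX : MemLp X 2 μ)
    (c : ℝ) :
    ∫ ω, (X ω - c) ^ 2 ∂μ = Var[X; μ] + (μ[X] - c) ^ 2 := by
  have hsub : MemLp (fun ω ↦ X ω - c) 2 μ := hX.sub (memLp_const c)
  have hmean : ∫ ω, (X ω - c) ∂μ = μ[X] - c := by
    rw [integral_sub (hX.integrable one_le_two) (integrable_const c), integral_const, probReal_univ,
      one_smul]
  rw [← variance_sub_const hX.aestronglyMeasurable c, variance_eq_sub hsub, hmean]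
  simp only [Pi.pow_apply, sub_add_cancel]

lemma measureReal_mul_integral_cond (hs : μ s ≠ ⊤) (f : Ω → ℝ) :
    μ.real s * ∫ ω, f ω ∂μ[|s] = ∫ ω in s, f ω ∂μ := by
  rcases eq_or_ne (μ s) 0 with h0 | h0
  · simp [Measure.real, h0, Measure.restrict_eq_zero.mpr h0]
  · rw [ProbabilityTheory.cond, integral_smul_measure, smul_eq_mul, ENNReal.toReal_inv, ← mul_assoc,
      Measure.real, mul_inv_cancel₀ (ENNReal.toReal_ne_zero.mpr ⟨h0, hs⟩), one_mul]

lemma setIntegral_sub_const_sq_le {c M : ℝ} (hs : μ s < ⊤)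
    (hbound : ∀ᵐ ω ∂μ, |X ω - c| ≤ M) :
    ∫ ω in s, (X ω - c) ^ 2 ∂μ ≤ M ^ 2 * μ.real s := by
  have hsq : ∀ᵐ ω ∂μ.restrict s, ‖(X ω - c) ^ 2‖ ≤ M ^ 2 := by
    filter_upwards [ae_restrict_of_ae hbound] with ω hω
    rw [Real.norm_eq_abs, abs_sq, ← sq_abs]
    exact pow_le_pow_left₀ (abs_nonneg _) hω 2
  have := norm_setIntegral_le_of_norm_le_const_ae hs hsq
  rw [Real.norm_eq_abs] at this
  exact (le_abs_self _).trans this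

end

theorem total_variance_bound_general
    {Ω : Type*} [MeasureSpace Ω] [IsProbabilityMeasure (ℙ : Measure Ω)]
    (X : Ω → ℝ) (hmeas : Measurable X)
    (θ M b v : ℝ)
    (hbound : ∀ᵐ ω ∂ℙ, |X ω - θ| ≤ M)
    (A : Set Ω) (hA : MeasurableSet A)
    (η : ℝ) (hη1 : η < 1)
    (hPA : 1 - η ≤ (ℙ A).toReal)
    (hcondVar : variance X (ℙ[|A]) ≤ v)
    (hcondMean : |(∫ ω, X ω ∂(ℙ[|A])) - θ| ≤ b) :
    variance X ℙ ≤ v + b ^ 2 + η * M ^ 2 := by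
  have hX : MemLp X 2 ℙ := memLp_of_ae_abs_sub_le hmeas.aestronglyMeasurable hbound
  have : IsProbabilityMeasure ℙ[|A] :=
    cond_isProbabilityMeasure fun h ↦ by simp [h] at hPA; linarith
  have hXA : MemLp X 2 ℙ[|A] :=
    memLp_of_ae_abs_sub_le hmeas.aestronglyMeasurable (cond_absolutelyContinuous.ae_le hbound)
  have hcond : ∫ ω, (X ω - θ) ^ 2 ∂ℙ[|A] ≤ v + b ^ 2 := by
    rw [integral_sub_const_sq_eq_variance_add hXA θ, ← sq_abs (_ - θ)]
    gcongr
  have hAc : (ℙ : Measure Ω).real Aᶜ ≤ η := by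
    rw [probReal_compl_eq_one_sub hA]
    exact sub_le_comm.mp hPA
  calc variance X ℙ ≤ ∫ ω, (X ω - θ) ^ 2 ∂ℙ := by
        rw [integral_sub_const_sq_eq_variance_add hX θ]
        exact le_add_of_nonneg_right (sq_nonneg _)
    _ = (ℙ : Measure Ω).real A * ∫ ω, (X ω - θ) ^ 2 ∂ℙ[|A] + ∫ ω in Aᶜ, (X ω - θ) ^ 2 ∂ℙ := by
        rw [measureReal_mul_integral_cond (measure_ne_top _ _), integral_add_compl hA]
        exact (hX.sub (memLp_const θ)).integrable_sq
    _ ≤ 1 * (v + b ^ 2) + M ^ 2 * (ℙ : Measure Ω).real Aᶜ := by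
        gcongr
        · exact measureReal_le_one
        · exact setIntegral_sub_const_sq_le (measure_lt_top _ _) hbound
    _ ≤ 1 * (v + b ^ 2) + M ^ 2 * η := by gcongr
    _ = v + b ^ 2 + η * M ^ 2 := by ring

theorem total_variance_bound
    {Ω : Type*} [MeasureSpace Ω] [IsProbabilityMeasure (ℙ : Measure Ω)]
    (X : Ω → ℝ) (hmeas : Measurable X)
    (θ M b v : ℝ) (hθ : 0 ≤ θ) (hM : 0 ≤ M) (hb : 0 ≤ b) (hv : 0 ≤ v)
    (hbound : ∀ᵐ ω ∂ℙ, |X ω - θ| ≤ M)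
    (A : Set Ω) (hA : MeasurableSet A)
    (η : ℝ) (hη0 : 0 ≤ η) (hη1 : η < 1)
    (hPA : 1 - η ≤ (ℙ A).toReal)
    (hcondVar : variance X (ℙ[|A]) ≤ v)
    (hcondMean : |(∫ ω, X ω ∂(ℙ[|A])) - θ| ≤ b) :
    variance X ℙ ≤ v + b ^ 2 + η * M ^ 2 :=
  total_variance_bound_general X hmeas θ M b v hbound A hA η hη1 hPA hcondVar hcondMean
end

section
/- Let d ≥ 1 be an integer, R > 0 and β ≥ 0 reals, and let K' ⊆ ℝ × ℝ^d be a measurable set with 0 < Vol(K') < ∞ whose first coordinate lies in [0, 2R]. Define Z = ∫_{K'} exp(−β·x₀) d(x₀, x). Then the fidelity between the uniform density 1/Vol(K') and the Gibbs density exp(−β·x₀)/Z on K' satisfies ∫_{K'} √(exp(−β·x₀) / (Vol(K')·Z)) d(x₀, x) ≥ 1 − 2βR. -/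
/-!
On `K'` the Gibbs weight `exp (-β x₀)` lies between `exp (-2βR)` and `1`. A density `f` on a set
of volume `V` with `a ≤ f ≤ b` has `Z = ∫ f ≤ b V`, so `√(f / (V Z)) ≥ √(a / b) / V` pointwise and
the fidelity with the uniform density is at least `√(a / b)`. Here `√(a / b) = exp (-βR) ≥ 1 - βR`.
-/

open MeasureTheory Set

lemma sqrt_div_div_le_sqrt_div_mul {a b y V Z : ℝ} (ha : 0 < a) (hay : a ≤ y) (hV : 0 < V)
    (hZ : 0 < Z) (hZb : Z ≤ b * V) : √(a / b) / V ≤ √(y / (V * Z)) := by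
  have hb : 0 < b := pos_of_mul_pos_left (hZ.trans_le hZb) hV.le
  have hVZ : V * Z ≤ b * V ^ 2 := by nlinarith [mul_le_mul_of_nonneg_left hZb hV.le]
  rw [Real.le_sqrt' (by positivity), div_pow, Real.sq_sqrt (by positivity), div_div,
    div_le_div_iff₀ (by positivity) (by positivity)]
  exact mul_le_mul hay hVZ (by positivity) (ha.le.trans hay)

section

variable {α : Type*} [MeasurableSpace α] {μ : Measure α} {s : Set α} {f : α → ℝ} {a b : ℝ}

lemma integrableOn_sqrt_of_le (hs : MeasurableSet s) (hμs : μ s ≠ ⊤) (hf : Measurable f)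
    (hfb : ∀ x ∈ s, f x ≤ b) : IntegrableOn (fun x => √(f x)) s μ :=
  Measure.integrableOn_of_bounded (M := √b) hμs hf.sqrt.aestronglyMeasurable <|
    (ae_restrict_iff' hs).2 <| ae_of_all _ fun x hx => by
      rw [Real.norm_of_nonneg (Real.sqrt_nonneg _)]
      exact Real.sqrt_le_sqrt (hfb x hx)

theorem sqrt_div_le_setIntegral_sqrt_div (hs : MeasurableSet s) (hμs : μ s ≠ ⊤) (hμs₀ : μ s ≠ 0)
    (hf : Measurable f) (ha : 0 < a) (hfa : ∀ x ∈ s, a ≤ f x) (hfb : ∀ x ∈ s, f x ≤ b) :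
    √(a / b) ≤ ∫ x in s, √(f x / (μ.real s * ∫ y in s, f y ∂μ)) ∂μ := by
  set V := μ.real s
  set Z := ∫ y in s, f y ∂μ
  have hV : 0 < V := ENNReal.toReal_pos hμs₀ hμs
  have hfint : IntegrableOn f s μ :=
    Measure.integrableOn_of_bounded (M := b) hμs hf.aestronglyMeasurable <|
      (ae_restrict_iff' hs).2 <| ae_of_all _ fun x hx => by
        rw [Real.norm_of_nonneg (ha.le.trans (hfa x hx))]
        exact hfb x hx
  have hZb : Z ≤ b * V :=
    (setIntegral_mono_on hfint (integrableOn_const hμs) hs hfb).trans_eq <| by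
      rw [setIntegral_const, smul_eq_mul, mul_comm]
  have hZ : 0 < Z := (mul_pos ha hV).trans_le (setIntegral_ge_of_const_le_real hs hμs hfa hfint)
  have hVZ : 0 ≤ V * Z := by positivity
  calc √(a / b) = √(a / b) / V * V := (div_mul_cancel₀ _ hV.ne').symm
    _ ≤ ∫ x in s, √(f x / (V * Z)) ∂μ :=
      setIntegral_ge_of_const_le_real hs hμs
        (fun x hx => sqrt_div_div_le_sqrt_div_mul ha (hfa x hx) hV hZ hZb)
        (integrableOn_sqrt_of_le hs hμs (hf.div_const _)
          fun x hx => div_le_div_of_nonneg_right (hfb x hx) hVZ)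

end

theorem gibbs_uniform_fidelity_bound_general
    (d : ℕ) (R β : ℝ) (hR : 0 < R) (hβ : 0 ≤ β)
    (K' : Set (ℝ × EuclideanSpace ℝ (Fin d))) (hK' : MeasurableSet K')
    (hpos : 0 < volume K') (hfin : volume K' < ⊤)
    (hsub : K' ⊆ Icc 0 (2 * R) ×ˢ (univ : Set (EuclideanSpace ℝ (Fin d))))
    (Z : ℝ) (hZ : Z = ∫ p in K', Real.exp (-β * p.1) ∂volume) :
    1 - 2 * β * R ≤
      ∫ p in K', Real.sqrt (Real.exp (-β * p.1) / ((volume K').toReal * Z)) ∂volume := by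
  have hfidelity := sqrt_div_le_setIntegral_sqrt_div (f := fun p => Real.exp (-β * p.1))
    (a := Real.exp (-(2 * β * R))) (b := 1) hK' hfin.ne hpos.ne' (by fun_prop) (Real.exp_pos _)
    (fun p hp => Real.exp_le_exp.2 (by nlinarith [(hsub hp).1.2]))
    (fun p hp => Real.exp_le_one_iff.2 (by nlinarith [(hsub hp).1.1]))
  rw [hZ]
  refine le_trans ?_ hfidelity
  calc 1 - 2 * β * R ≤ 1 - β * R := by linarith [mul_nonneg hβ hR.le]
    _ ≤ Real.exp (-(β * R)) := by linarith [Real.add_one_le_exp (-(β * R))]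
    _ = √(Real.exp (-(2 * β * R)) / 1) := by rw [div_one, ← Real.exp_half]; ring_nf

theorem gibbs_uniform_fidelity_bound
    (d : ℕ) (hd : 1 ≤ d) (R β : ℝ) (hR : 0 < R) (hβ : 0 ≤ β)
    (K' : Set (ℝ × EuclideanSpace ℝ (Fin d))) (hK' : MeasurableSet K')
    (hpos : 0 < volume K') (hfin : volume K' < ⊤)
    (hsub : K' ⊆ Icc 0 (2 * R) ×ˢ (univ : Set (EuclideanSpace ℝ (Fin d))))
    (Z : ℝ) (hZ : Z = ∫ p in K', Real.exp (-β * p.1) ∂volume) :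
    1 - 2 * β * R ≤
      ∫ p in K', Real.sqrt (Real.exp (-β * p.1) / ((volume K').toReal * Z)) ∂volume :=
  gibbs_uniform_fidelity_bound_general d R β hR hβ K' hK' hpos hfin hsub Z hZ
end
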